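/- Let Q be a finite poset, X a set containing Q, and (F, ι) a free lattice on X. Then the map ξ : Q → F defined by ξ(q) = inf { ι(q') : q' ∈ Q, q' ≥ q } is an order embedding: for all q₁, q₂ ∈ Q, q₁ ≤ q₂ in Q if and only if ξ(q₁) ≤ ξ(q₂) in F. -/

import Mathlib

open FirstOrder FirstOrder.Language

attribute [local instance] FirstOrder.Language.orderStructure

universe u u' v v' w w'

/-! ### A fixed computable Gödel encoding of sentences in the language of posets -/

instance (n : ℕ) : Encodable (Language.order.Functions n) := inferInstanceAs (Encodable Empty)

instance : Encodable (Σ i, Language.order.Functions i) := Sigma.encodable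

instance : Encodable (Σ n, Language.order.Relations n) :=
  Encodable.ofEquiv Unit (Equiv.equivPUnit.{1,1} _)

instance : Encodable (Σ n, Language.order.BoundedFormula Empty n) :=
  Encodable.ofLeftInjection
    (fun φ => φ.2.listEncode)
    (fun l => (BoundedFormula.listDecode l)[0]?)
    BoundedFormula.encoding.decode_encode

instance : Encodable Language.order.Sentence :=
  Encodable.ofLeftInjection (fun φ => (⟨0, φ⟩ : Σ n, Language.order.BoundedFormula Empty n))
    (fun ψ => match ψ with | ⟨0, φ⟩ => some φ | _ => none)
    (fun _ => rfl)

/-! ### Free lattices, bipartite posets, join covers -/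

/-- `ι : X → F` realizes `F` as a free lattice on the set `X`: every map from `X`
to a lattice extends uniquely to a lattice homomorphism on `F`. -/
def IsFreeLatticeOn {X : Type u} {F : Type v} [Lattice F] (ι : X → F) : Prop :=
  ∀ (L : Type w) [Lattice L] (f : X → L), ∃! h : LatticeHom F L, ∀ x : X, h (ι x) = f x

/-- A bipartite poset: every element is maximal or minimal. -/
def IsBipartitePoset (Q : Type*) [PartialOrder Q] : Prop :=
  ∀ q : Q, IsMax q ∨ IsMin q

/-- A nice bipartite poset (the maximal elements form the top part `A`, the
non-maximal (hence minimal) elements the bottom part `B`): both parts have at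
least three elements, every `a ∈ A` is strictly above at least two elements of `B`
and fails to be above at least one element of `B`, and dually for `B`. -/
def IsNiceBipartitePoset (Q : Type*) [PartialOrder Q] : Prop :=
  IsBipartitePoset Q ∧
  (∃ a₁ a₂ a₃ : Q, IsMax a₁ ∧ IsMax a₂ ∧ IsMax a₃ ∧ a₁ ≠ a₂ ∧ a₁ ≠ a₃ ∧ a₂ ≠ a₃) ∧
  (∃ b₁ b₂ b₃ : Q, ¬IsMax b₁ ∧ ¬IsMax b₂ ∧ ¬IsMax b₃ ∧ b₁ ≠ b₂ ∧ b₁ ≠ b₃ ∧ b₂ ≠ b₃) ∧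
  (∀ a : Q, IsMax a →
    (∃ b₁ b₂ : Q, ¬IsMax b₁ ∧ ¬IsMax b₂ ∧ b₁ ≠ b₂ ∧ b₁ < a ∧ b₂ < a) ∧
    (∃ b : Q, ¬IsMax b ∧ ¬ b ≤ a)) ∧
  (∀ b : Q, ¬IsMax b →
    (∃ a₁ a₂ : Q, IsMax a₁ ∧ IsMax a₂ ∧ a₁ ≠ a₂ ∧ b < a₁ ∧ b < a₂) ∧
    (∃ a : Q, IsMax a ∧ ¬ b ≤ a))

section JoinCovers

variable {L : Type*} [Lattice L]

/-- `S` is a join cover of `p`: a finite (nonempty) subset with `p ≤ sup S`. -/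
def IsJoinCover (p : L) (S : Finset L) : Prop :=
  ∃ hS : S.Nonempty, p ≤ S.sup' hS id

/-- A join cover is nontrivial if `p ≰ s` for every `s ∈ S`. -/
def IsNontrivialJoinCover (p : L) (S : Finset L) : Prop :=
  IsJoinCover p S ∧ ∀ s ∈ S, ¬ p ≤ s

/-- `S` refines `T` if every element of `S` lies below some element of `T`. -/
def FinsetRefines (S T : Finset L) : Prop :=
  ∀ s ∈ S, ∃ t ∈ T, s ≤ t

/-- A join cover `S` of `p` is minimal if every join cover of `p` refining `S` contains `S`. -/
def IsMinimalJoinCover (p : L) (S : Finset L) : Prop :=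
  IsJoinCover p S ∧ ∀ T : Finset L, IsJoinCover p T → FinsetRefines T S → S ⊆ T

/-- A join cover `S` of `p` is doubly minimal if it is minimal, nontrivial, and any
nontrivial join cover of `p` whose join is below the join of `S` has the same join. -/
def IsDoublyMinimalJoinCover (p : L) (S : Finset L) : Prop :=
  IsMinimalJoinCover p S ∧ IsNontrivialJoinCover p S ∧
  ∀ (T : Finset L) (hT : T.Nonempty) (hS : S.Nonempty), IsNontrivialJoinCover p T →
    T.sup' hT id ≤ S.sup' hS id → T.sup' hT id = S.sup' hS id

/-- `ERel p q` : `p ≠ q` and `q` belongs to some doubly minimal join cover of `p`. -/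
def ERel (p q : L) : Prop :=
  p ≠ q ∧ ∃ S : Finset L, IsDoublyMinimalJoinCover p S ∧ q ∈ S

/-- A subset `Y` of a lattice is independent if no member is below the join, nor above
the meet, of a finite nonempty subset of `Y` not containing it. -/
def IsIndependentSubset (Y : Set L) : Prop :=
  ∀ y ∈ Y, ∀ Z : Finset L, ↑Z ⊆ Y \ {y} → ∀ hZ : Z.Nonempty,
    ¬ y ≤ Z.sup' hZ id ∧ ¬ Z.inf' hZ id ≤ y

end JoinCovers

/-- The standard embedding `ξ` of a finite poset `Q`, included in a set `X` via `j`, into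
a lattice `F` equipped with `ι : X → F`: `ξ q = inf { ι (j q') : q' ∈ Q, q' ≥ q }`. -/
noncomputable def xiMap {Q : Type u} [PartialOrder Q] [Fintype Q] {X : Type u'} (j : Q → X)
    {F : Type v} [Lattice F] (ι : X → F) (q : Q) : F := by
  classical
  exact (Finset.univ.filter fun q' : Q => q ≤ q').inf'
    ⟨q, Finset.mem_filter.mpr ⟨Finset.mem_univ q, le_refl q⟩⟩ fun q' => ι (j q')

/-- The word `w_Q` associated to a finite nice bipartite poset `Q`:
`w_Q = ⋀_{a ∈ max Q} (ξ a ⊔ ⋁ { ξ b : b ∈ min Q, b ≰ a })`. -/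
noncomputable def wQ {Q : Type u} [PartialOrder Q] [Fintype Q] {X : Type u'} (j : Q → X)
    {F : Type v} [Lattice F] (ι : X → F) (hQ : IsNiceBipartitePoset Q) : F := by
  classical
  have hA : (Finset.univ.filter fun a : Q => IsMax a).Nonempty := by
    obtain ⟨a₁, -, -, h₁, -⟩ := hQ.2.1
    exact ⟨a₁, Finset.mem_filter.mpr ⟨Finset.mem_univ _, h₁⟩⟩
  have hB : ∀ a : Q, (Finset.univ.filter fun b : Q => ¬ IsMax b ∧ ¬ b ≤ a).Nonempty := by
    intro a
    by_cases hmax : IsMax a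
    · obtain ⟨b, hb1, hb2⟩ := (hQ.2.2.2.1 a hmax).2
      exact ⟨b, Finset.mem_filter.mpr ⟨Finset.mem_univ _, hb1, hb2⟩⟩
    · have hmin : IsMin a := (hQ.1 a).resolve_left hmax
      obtain ⟨b₁, b₂, b₃, h1, h2, h3, h12, h13, h23⟩ := hQ.2.2.1
      rcases eq_or_ne b₁ a with rfl | hne
      · refine ⟨b₂, Finset.mem_filter.mpr ⟨Finset.mem_univ _, h2, fun hle => ?_⟩⟩
        exact h12 (le_antisymm (hmin hle) hle)
      · refine ⟨b₁, Finset.mem_filter.mpr ⟨Finset.mem_univ _, h1, fun hle => ?_⟩⟩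
        exact hne (le_antisymm hle (hmin hle))
  exact (Finset.univ.filter fun a : Q => IsMax a).inf' hA fun a =>
    xiMap j ι a ⊔
      (Finset.univ.filter fun b : Q => ¬ IsMax b ∧ ¬ b ≤ a).sup' (hB a) (xiMap j ι)

/-- Universally quantify the last `l` (de Bruijn) variables of a bounded formula. -/
def BoundedFormula.allsLast {L : Language} {α : Type*} :
    ∀ {n : ℕ} (l : ℕ), L.BoundedFormula α (n + l) → L.BoundedFormula α n
  | _, 0, ψ => ψ
  | _, l + 1, ψ => BoundedFormula.allsLast l ψ.all

/-- An `∃∀`-sentence in the language of posets: a sentence of the form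
`∃ x₁ … x_k ∀ y₁ … y_l, ψ` with `ψ` quantifier-free. -/
def IsEASentence (φ : Language.order.Sentence) : Prop :=
  ∃ (k l : ℕ) (ψ : Language.order.BoundedFormula Empty (k + l)),
    ψ.IsQF ∧ φ = (BoundedFormula.allsLast l ψ).exs

/-! Monotonicity of `ξ` holds in any lattice. For the converse, send `x ∈ X` to the proposition
`x ∈ j '' Ici q₁` in the two-element lattice `Prop`. The induced lattice homomorphism maps `ξ q`
to "`j q' ∈ j '' Ici q₁` for every `q' ≥ q`", which is true for `q = q₁`; so `ξ q₁ ≤ ξ q₂`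
gives `j q₂ ∈ j '' Ici q₁`, that is `q₁ ≤ q₂` by injectivity of `j`. -/

open Function

section XiMap

variable {Q : Type u} [PartialOrder Q] [Fintype Q] {X : Type u'} (j : Q → X)

theorem xiMap_le_apply {F : Type v} [Lattice F] (ι : X → F) {q q' : Q} (h : q ≤ q') :
    xiMap j ι q ≤ ι (j q') := by
  classical
  exact Finset.inf'_le _ (by simpa using h)

theorem le_xiMap_iff {F : Type v} [Lattice F] (ι : X → F) {a : F} {q : Q} :
    a ≤ xiMap j ι q ↔ ∀ q', q ≤ q' → a ≤ ι (j q') := by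
  classical
  exact ⟨fun h q' hq' => h.trans (xiMap_le_apply j ι hq'),
    fun h => Finset.le_inf' _ _ fun q' hq' => h q' (by simpa using hq')⟩

theorem xiMap_mono {F : Type v} [Lattice F] (ι : X → F) : Monotone (xiMap j ι) :=
  fun _ _ h => (le_xiMap_iff j ι).2 fun _ h' => xiMap_le_apply j ι (h.trans h')

theorem map_xiMap {F : Type v} [Lattice F] {L : Type w} [Lattice L] (h : LatticeHom F L)
    (ι : X → F) (q : Q) : h (xiMap j ι q) = xiMap j (h ∘ ι) q := by
  classical
  exact map_finset_inf' h _ _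

def upSetIndicator (q : Q) (x : X) : ULift.{w} Prop :=
  ULift.up (x ∈ j '' Set.Ici q)

variable {j} in
theorem le_of_xiMap_upSetIndicator_le (hj : Injective j) {q₁ q₂ : Q}
    (h : xiMap j (upSetIndicator.{u, u', w} j q₁) q₁ ≤ xiMap j (upSetIndicator j q₁) q₂) :
    q₁ ≤ q₂ := by
  have htop : ⊤ ≤ xiMap j (upSetIndicator j q₁) q₁ :=
    (le_xiMap_iff j _).2 fun q' hq' _ => ⟨q', hq', rfl⟩
  obtain ⟨q', hq', hjq'⟩ : j q₂ ∈ j '' Set.Ici q₁ :=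
    (htop.trans (h.trans (xiMap_le_apply j _ le_rfl))) trivial
  exact hj hjq' ▸ hq'

end XiMap

/-- **Theorem (Statement 6).** For a finite poset `Q` contained (via the injection `j`)
in a set `X`, and a free lattice `(F, ι)` on `X`, the standard map
`ξ q = inf { ι (j q') : q' ≥ q }` is an order embedding. -/
theorem xiMap_orderEmbedding {Q : Type u} [PartialOrder Q] [Fintype Q]
    {X : Type u'} (j : Q → X) (hj : Function.Injective j)
    {F : Type v} [Lattice F] (ι : X → F) (hF : IsFreeLatticeOn.{u', v, w} ι) :
    ∀ q₁ q₂ : Q, q₁ ≤ q₂ ↔ xiMap j ι q₁ ≤ xiMap j ι q₂ := by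
  intro q₁ q₂
  refine ⟨fun h => xiMap_mono j ι h, fun hle => le_of_xiMap_upSetIndicator_le hj ?_⟩
  obtain ⟨h, hh, -⟩ := hF (ULift.{w} Prop) (upSetIndicator j q₁)
  have hcomp : h ∘ ι = upSetIndicator j q₁ := funext hh
  simpa only [map_xiMap, hcomp] using OrderHomClass.mono h hle
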